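/- Let f : 2^N → ℝ be a monotone submodular function, let ε ∈ (0,1/2), let ρ ≤ r be positive integers, and let v* be a real number with (1 − ε/20)·OPT ≤ v* ≤ OPT. Let S ⊆ S_1 ⊆ ⋯ ⊆ S_ρ ⊆ S⁺ be subsets of N with f(S) ≤ v* and f(S⁺) − f(S) ≤ (ε/20)·(OPT − f(S)). Let R_1, …, R_ρ be random subsets of N defined on a common finite probability space, and suppose that for each i ∈ {1,…,ρ} there is a real number v_i with |v_i − E[f_{S_i}(R_i)]| ≤ (ε/(20ρ))·(v* − f(S)) and v_i < ((1−ε)/r)·(v* − f(S)). Then E[f_{S⁺ ∪ (R_1 ∪ ⋯ ∪ R_ρ)}(O)] ≥ (1 − ρ/r − ε/10)·(OPT − f(S)). -/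

import Mathlib

open Finset

/-- The marginal contribution `f_S(X) = f(S ∪ X) - f(S)`. -/
noncomputable def marg {α : Type*} [DecidableEq α] (f : Finset α → ℝ) (S X : Finset α) : ℝ :=
  f (S ∪ X) - f S

lemma marg_one {α : Type*} [DecidableEq α] (f : Finset α → ℝ)
    (hmono : ∀ A B : Finset α, A ⊆ B → f A ≤ f B)
    (hsub : ∀ A B : Finset α, A ⊆ B → ∀ a ∉ B,
      f (insert a B) - f B ≤ f (insert a A) - f A)
    {A B : Finset α} (hAB : A ⊆ B) (a : α) :
    f (insert a B) - f B ≤ f (insert a A) - f A := by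
  by_cases h : a ∈ B
  · rw [Finset.insert_eq_self.mpr h]
    have := hmono A (insert a A) (Finset.subset_insert a A)
    linarith
  · exact hsub A B hAB a h

lemma marg_union_le {α : Type*} [DecidableEq α] (f : Finset α → ℝ)
    (hmono : ∀ A B : Finset α, A ⊆ B → f A ≤ f B)
    (hsub : ∀ A B : Finset α, A ⊆ B → ∀ a ∉ B,
      f (insert a B) - f B ≤ f (insert a A) - f A)
    (X : Finset α) : ∀ A B : Finset α, A ⊆ B →
    f (B ∪ X) - f B ≤ f (A ∪ X) - f A := by
  induction X using Finset.induction_on with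
  | empty => intro A B h; simp
  | @insert a X ha ih =>
    intro A B hAB
    have h1 := marg_one f hmono hsub (Finset.union_subset_union hAB (subset_refl X)) a
    have h2 := ih A B hAB
    rw [Finset.union_insert, Finset.union_insert]
    linarith

set_option maxHeartbeats 1000000 in
/-- Lemma 9 of the paper: the epoch bound on the expected marginal
contribution of `O`, for the full (sampled) algorithm using estimates `v_i` and a
guess `v*` of `OPT`. -/
theorem stmt11 {α : Type*} [Fintype α] [DecidableEq α]
    (f : Finset α → ℝ)
    (hmono : ∀ A B : Finset α, A ⊆ B → f A ≤ f B)
    (hsub : ∀ A B : Finset α, A ⊆ B → ∀ a ∉ B,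
      f (insert a B) - f B ≤ f (insert a A) - f A)
    (k : ℕ) (hk1 : 1 ≤ k) (hkn : k ≤ Fintype.card α)
    (OPT : ℝ) (hOPTub : ∀ T : Finset α, T.card ≤ k → f T ≤ OPT)
    (O : Finset α) (hOcard : O.card ≤ k) (hOval : f O = OPT)
    (ε : ℝ) (hε0 : 0 < ε) (hε1 : ε < 1 / 2)
    (ρ r : ℕ) (hρ : 1 ≤ ρ) (hρr : ρ ≤ r)
    (vstar : ℝ) (hv1 : (1 - ε / 20) * OPT ≤ vstar) (hv2 : vstar ≤ OPT)
    (S Splus : Finset α) (Sc : ℕ → Finset α)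
    (hSc0 : Sc 0 = S) (hSc1 : S ⊆ Sc 1)
    (hScchain : ∀ i, 1 ≤ i → i < ρ → Sc i ⊆ Sc (i + 1)) (hSclast : Sc ρ ⊆ Splus)
    (hS : f S ≤ vstar)
    (hepoch : f Splus - f S ≤ (ε / 20) * (OPT - f S))
    (Ω : Type*) [Fintype Ω] (p : Ω → ℝ) (hp : ∀ ω, 0 ≤ p ω) (hp1 : ∑ ω, p ω = 1)
    (R : ℕ → Ω → Finset α) (v : ℕ → ℝ)
    (hest : ∀ i, 1 ≤ i → i ≤ ρ →
      |v i - ∑ ω, p ω * marg f (Sc i) (R i ω)| ≤ (ε / (20 * ρ)) * (vstar - f S))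
    (hlow : ∀ i, 1 ≤ i → i ≤ ρ → v i < ((1 - ε) / r) * (vstar - f S)) :
    (1 - (ρ : ℝ) / r - ε / 10) * (OPT - f S) ≤
      ∑ ω, p ω * marg f (Splus ∪ (Finset.Icc 1 ρ).biUnion (fun i => R i ω)) O := by
  -- chain: Sc i ⊆ Splus for 1 ≤ i ≤ ρ
  have hstep : ∀ d i, 1 ≤ i → i + d ≤ ρ → Sc i ⊆ Sc (i + d) := by
    intro d
    induction d with
    | zero => intro i _ _; simp
    | succ d ih =>
      intro i h1 h2
      have ha : Sc i ⊆ Sc (i + d) := ih i h1 (by omega)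
      have hb : Sc (i + d) ⊆ Sc (i + d + 1) := hScchain (i + d) (by omega) (by omega)
      have : i + (d + 1) = i + d + 1 := by omega
      rw [this]
      exact ha.trans hb
  have hchain : ∀ i, 1 ≤ i → i ≤ ρ → Sc i ⊆ Splus := by
    intro i h1 h2
    have := hstep (ρ - i) i h1 (by omega)
    have he : i + (ρ - i) = ρ := by omega
    rw [he] at this
    exact this.trans hSclast
  -- telescoping bound for each ω
  have htel : ∀ ω : Ω, ∀ j, j ≤ ρ →
      f (Splus ∪ (Finset.Icc 1 j).biUnion (fun i => R i ω)) - f Splus ≤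
      ∑ i ∈ Finset.Icc 1 j, (f (Sc i ∪ R i ω) - f (Sc i)) := by
    intro ω j
    induction j with
    | zero => intro _; simp
    | succ j ih =>
      intro hj
      have hj' : j ≤ ρ := by omega
      have hIcc : Finset.Icc 1 (j + 1) = insert (j + 1) (Finset.Icc 1 j) :=
        (Finset.insert_Icc_right_eq_Icc_add_one (by omega)).symm
      have hnot : j + 1 ∉ Finset.Icc 1 j := by simp
      set B := (Finset.Icc 1 j).biUnion (fun i => R i ω) with hB
      have hU : Splus ∪ (Finset.Icc 1 (j + 1)).biUnion (fun i => R i ω)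
          = (Splus ∪ B) ∪ R (j + 1) ω := by
        rw [hIcc, Finset.biUnion_insert, ← hB]
        ac_rfl
      have hsubset : Sc (j + 1) ⊆ Splus ∪ B :=
        (hchain (j + 1) (by omega) (by omega)).trans Finset.subset_union_left
      have hkey := marg_union_le f hmono hsub (R (j + 1) ω) _ _ hsubset
      rw [hU, hIcc, Finset.sum_insert hnot]
      have := ih hj'
      linarith
  -- pointwise bound
  have hpt : ∀ ω : Ω,
      OPT - f Splus - ∑ i ∈ Finset.Icc 1 ρ, (f (Sc i ∪ R i ω) - f (Sc i)) ≤
      marg f (Splus ∪ (Finset.Icc 1 ρ).biUnion (fun i => R i ω)) O := by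
    intro ω
    set U := Splus ∪ (Finset.Icc 1 ρ).biUnion (fun i => R i ω) with hUdef
    have h1 : OPT ≤ f (U ∪ O) := by
      rw [← hOval]
      exact hmono O (U ∪ O) Finset.subset_union_right
    have h2 := htel ω ρ le_rfl
    unfold marg
    linarith
  -- expectations
  set m : ℕ → Ω → ℝ := fun i ω => f (Sc i ∪ R i ω) - f (Sc i) with hm
  have hmargm : ∀ i ω, marg f (Sc i) (R i ω) = m i ω := fun i ω => rfl
  set C : ℝ := OPT - f Splus with hC
  have hsum1 : ∑ ω, p ω * (C - ∑ i ∈ Finset.Icc 1 ρ, m i ω)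
      = C - ∑ i ∈ Finset.Icc 1 ρ, ∑ ω, p ω * m i ω := by
    have : ∀ ω, p ω * (C - ∑ i ∈ Finset.Icc 1 ρ, m i ω)
        = p ω * C - ∑ i ∈ Finset.Icc 1 ρ, p ω * m i ω := by
      intro ω; rw [mul_sub, Finset.mul_sum]
    rw [Finset.sum_congr rfl (fun ω _ => this ω), Finset.sum_sub_distrib,
      ← Finset.sum_mul, hp1, one_mul, Finset.sum_comm]
  -- expectation bound for the big sum
  have hmain : ∑ ω, p ω * (C - ∑ i ∈ Finset.Icc 1 ρ, m i ω) ≤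
      ∑ ω, p ω * marg f (Splus ∪ (Finset.Icc 1 ρ).biUnion (fun i => R i ω)) O := by
    apply Finset.sum_le_sum
    intro ω _
    exact mul_le_mul_of_nonneg_left (hpt ω) (hp ω)
  -- bound on each expected marginal
  set W : ℝ := vstar - f S with hW
  have hW0 : 0 ≤ W := by simp [hW]; linarith
  have hEi : ∀ i ∈ Finset.Icc 1 ρ, ∑ ω, p ω * m i ω ≤
      ((1 - ε) / r) * W + (ε / (20 * ρ)) * W := by
    intro i hi
    simp only [Finset.mem_Icc] at hi
    have h1 := hest i hi.1 hi.2
    have h2 := hlow i hi.1 hi.2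
    simp only [hmargm] at h1
    rw [abs_le] at h1
    linarith [h1.1]
  have hEsum : ∑ i ∈ Finset.Icc 1 ρ, ∑ ω, p ω * m i ω ≤
      (ρ : ℝ) * (((1 - ε) / r) * W + (ε / (20 * ρ)) * W) := by
    calc ∑ i ∈ Finset.Icc 1 ρ, ∑ ω, p ω * m i ω
        ≤ ∑ _i ∈ Finset.Icc 1 ρ, (((1 - ε) / r) * W + (ε / (20 * ρ)) * W) :=
          Finset.sum_le_sum hEi
      _ = (ρ : ℝ) * (((1 - ε) / r) * W + (ε / (20 * ρ)) * W) := by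
          rw [Finset.sum_const, Nat.card_Icc, Nat.add_sub_cancel, nsmul_eq_mul]
  -- final arithmetic
  have hρR : (1 : ℝ) ≤ (ρ : ℝ) := by exact_mod_cast hρ
  have hrR : (ρ : ℝ) ≤ (r : ℝ) := by exact_mod_cast hρr
  have hr0 : (0 : ℝ) < (r : ℝ) := by linarith
  have hρ0 : (0 : ℝ) < (ρ : ℝ) := by linarith
  have hsimp : (ρ : ℝ) * ((ε / (20 * ρ)) * W) = (ε / 20) * W := by
    field_simp
  have hDW : W ≤ OPT - f S := by simp [hW]; linarith
  have hD0 : 0 ≤ OPT - f S := by linarith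
  have hq0 : 0 ≤ (ρ : ℝ) / r := div_nonneg (by linarith) (le_of_lt hr0)
  have hfinal : (1 - (ρ : ℝ) / r - ε / 10) * (OPT - f S) ≤
      C - ((ρ : ℝ) * (((1 - ε) / r) * W + (ε / (20 * ρ)) * W)) := by
    have hεW : 0 ≤ ε * W := mul_nonneg hε0.le hW0
    have hεDW : 0 ≤ ε * ((OPT - f S) - W) := mul_nonneg hε0.le (by linarith)
    have hkey : 0 ≤ ((ρ : ℝ) / r) * ((OPT - f S) - W + ε * W) :=
      mul_nonneg hq0 (by linarith)
    have hC' : (OPT - f S) - (ε / 20) * (OPT - f S) ≤ C := by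
      simp only [hC]; linarith
    rw [mul_add, hsimp]
    have hexp : (ρ : ℝ) * (((1 - ε) / r) * W) = ((ρ : ℝ) / r) * W - ((ρ : ℝ) / r) * (ε * W) := by
      field_simp
    rw [hexp]
    nlinarith [hkey, hC', hDW, hD0, hW0, hεDW, hεW]
  calc (1 - (ρ : ℝ) / r - ε / 10) * (OPT - f S)
      ≤ C - ∑ i ∈ Finset.Icc 1 ρ, ∑ ω, p ω * m i ω := by linarith [hEsum, hfinal]
    _ = ∑ ω, p ω * (C - ∑ i ∈ Finset.Icc 1 ρ, m i ω) := hsum1.symm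
    _ ≤ _ := hmain
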